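/- arXiv:2401.11558 — 12 statements merged into one kernel-verified Lean document; each statement's English description precedes it below -/
import Mathlib

section
/- Let d, u be positive integers with 0 < u < d. For i ≥ 1 define a_i = u·i mod d. Let Δmax = {i ∈ [q] : a_i = max{a_1,...,a_i}} and Δmin = {i ∈ [q] : a_i = min{a_1,...,a_i}} where q = d / gcd(d,u). Then Δmax ∩ Δmin = {1}. -/
/-- `a i = u*i mod d` restricted to `1 ≤ i ≤ q`, records a running maximum. -/
def DeltaMax (d u q : ℕ) : Set ℕ :=
  {i | 1 ≤ i ∧ i ≤ q ∧ ∀ j, 1 ≤ j → j ≤ i → u * j % d ≤ u * i % d}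

/-- `a i = u*i mod d` restricted to `1 ≤ i ≤ q`, records a running minimum. -/
def DeltaMin (d u q : ℕ) : Set ℕ :=
  {i | 1 ≤ i ∧ i ≤ q ∧ ∀ j, 1 ≤ j → j ≤ i → u * i % d ≤ u * j % d}

theorem stmt0 (d u : ℕ) (hu : 0 < u) (hud : u < d) :
    DeltaMax d u (d / Nat.gcd d u) ∩ DeltaMin d u (d / Nat.gcd d u) = {1} := by
  ext i
  simp only [Set.mem_inter_iff, Set.mem_singleton_iff, DeltaMax, DeltaMin, Set.mem_setOf_eq]
  constructor
  · rintro ⟨⟨h1, h2, hmax⟩, _, _, hmin⟩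
    by_contra hne
    have hi2 : 2 ≤ i := by omega
    have e1 : u * 1 % d = u * i % d :=
      le_antisymm (hmax 1 le_rfl h1) (hmin 1 le_rfl h1)
    have e2 : u * 2 % d = u * i % d :=
      le_antisymm (hmax 2 (by omega) hi2) (hmin 2 (by omega) hi2)
    have hu1 : u * 1 % d = u := by rw [mul_one, Nat.mod_eq_of_lt hud]
    have h2u : u * 2 % d = u * 2 - d ∨ u * 2 % d = u * 2 := by
      rcases lt_or_ge (u * 2) d with h | h
      · right; exact Nat.mod_eq_of_lt h
      · left
        have hlt : u * 2 - d < d := by omega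
        rw [Nat.mod_eq_sub_mod h, Nat.mod_eq_of_lt hlt]
    omega
  · rintro rfl
    have hq : 1 ≤ d / Nat.gcd d u :=
      (Nat.one_le_div_iff (Nat.gcd_pos_of_pos_left u (by omega))).mpr
        (Nat.gcd_le_left _ (by omega))
    refine ⟨⟨le_rfl, hq, fun j hj hj' => ?_⟩, le_rfl, hq, fun j hj hj' => ?_⟩ <;>
      (have : j = 1 := by omega) <;> subst this <;> exact le_rfl
end

section
/- Let d, u be positive integers with 0 < u < d, a_i = u·i mod d, and Δmax, Δmin as above. For any δ ∈ Δmin and ε ∈ Δmax with δ ≠ ε, we have a_δ < a_ε. -/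
lemma key_inj (d u : ℕ) (hd : 0 < d) {δ ε : ℕ} (h1 : 1 ≤ δ)
    (h2 : ε ≤ d / Nat.gcd d u) (hlt : δ < ε)
    (heq : u * δ % d = u * ε % d) : False := by
  have hmod : u * δ ≡ u * ε [MOD d] := heq
  have hcan : δ ≡ ε [MOD d / Nat.gcd d u] :=
    Nat.ModEq.cancel_left_div_gcd hd hmod
  have hdvd : (d / Nat.gcd d u) ∣ ε - δ := (Nat.modEq_iff_dvd' hlt.le).mp hcan
  have hle := Nat.le_of_dvd (by omega) hdvd
  omega

theorem stmt1 (d u : ℕ) (hu : 0 < u) (hud : u < d)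
    (δ ε : ℕ) (hδ : δ ∈ DeltaMin d u (d / Nat.gcd d u))
    (hε : ε ∈ DeltaMax d u (d / Nat.gcd d u)) (hne : δ ≠ ε) :
    u * δ % d < u * ε % d := by
  obtain ⟨hδ1, hδ2, hδ3⟩ := hδ
  obtain ⟨hε1, hε2, hε3⟩ := hε
  have hd : 0 < d := lt_trans hu hud
  rcases lt_or_lt_iff_ne.mpr hne with h | h
  · have hle := hε3 δ hδ1 h.le
    rcases hle.lt_or_eq with h' | h'
    · exact h'
    · exact absurd h' (fun h' => key_inj d u hd hδ1 hε2 h h')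
  · have hle := hδ3 ε hε1 h.le
    rcases hle.lt_or_eq with h' | h'
    · exact h'
    · exact absurd h' (fun h' => key_inj d u hd hε1 hδ2 h h'.symm)
end

section
/- Let d, u be positive integers with 0 < u < d, a_i = u·i mod d. If δ ∈ Δmin(d,u) and ε is the smallest element of Δmin(d,u) strictly greater than δ, then ε − δ ∈ Δmax(d,u). -/
lemma modadd {d : ℕ} (A B : ℕ) (hA : A < d) (hB : B < d) :
    (A + B < d ∧ (A + B) % d = A + B) ∨ (d ≤ A + B ∧ (A + B) % d = A + B - d) := by
  rcases lt_or_ge (A + B) d with h | h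
  · exact Or.inl ⟨h, Nat.mod_eq_of_lt h⟩
  · refine Or.inr ⟨h, ?_⟩
    rw [Nat.mod_eq_sub_mod h, Nat.mod_eq_of_lt (by omega)]

lemma dvd_of_dvd_mul' {d u k : ℕ} (hd : 0 < d) (hu : 0 < u) (h : d ∣ u * k) :
    (d / Nat.gcd d u) ∣ k := by
  have hg : 0 < Nat.gcd d u := Nat.gcd_pos_of_pos_left u hd
  have hco : Nat.Coprime (d / Nat.gcd d u) (u / Nat.gcd d u) :=
    Nat.coprime_div_gcd_div_gcd hg
  have hdd : Nat.gcd d u * (d / Nat.gcd d u) = d := Nat.mul_div_cancel' (Nat.gcd_dvd_left d u)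
  have huu : Nat.gcd d u * (u / Nat.gcd d u) = u := Nat.mul_div_cancel' (Nat.gcd_dvd_right d u)
  obtain ⟨c, hc⟩ := h
  have h2 : (d / Nat.gcd d u) ∣ (u / Nat.gcd d u) * k := by
    refine ⟨c, ?_⟩
    have : Nat.gcd d u * ((u / Nat.gcd d u) * k) = Nat.gcd d u * ((d / Nat.gcd d u) * c) := by
      rw [← Nat.mul_assoc, ← Nat.mul_assoc, hdd, huu, hc]
    exact Nat.eq_of_mul_eq_mul_left hg this
  exact Nat.Coprime.dvd_of_dvd_mul_left hco h2

lemma wrap (d u i j : ℕ) : (u * i % d + u * j % d) % d = u * (i + j) % d := by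
  rw [Nat.mul_add]
  exact (Nat.add_mod _ _ _).symm

theorem stmt2 (d u : ℕ) (hu : 0 < u) (hud : u < d)
    (δ ε : ℕ) (hδ : δ ∈ DeltaMin d u (d / Nat.gcd d u))
    (hε : ε ∈ DeltaMin d u (d / Nat.gcd d u)) (hlt : δ < ε)
    (hmin : ∀ γ ∈ DeltaMin d u (d / Nat.gcd d u), δ < γ → ε ≤ γ) :
    ε - δ ∈ DeltaMax d u (d / Nat.gcd d u) := by
  obtain ⟨hδ1, hδq, hδmin⟩ := hδ
  obtain ⟨hε1, hεq, hεmin⟩ := hε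
  have hd : 0 < d := lt_trans hu hud
  have haδ : u * δ % d < d := Nat.mod_lt _ hd
  have haε : u * ε % d < d := Nat.mod_lt _ hd
  have ham : u * (ε - δ) % d < d := Nat.mod_lt _ hd
  have hle : u * ε % d ≤ u * δ % d := hεmin δ hδ1 (le_of_lt hlt)
  have hεδq : ε - δ < d / Nat.gcd d u := by omega
  -- strictness: a_ε < a_δ
  have hne : u * ε % d ≠ u * δ % d := by
    intro h
    have hle' : u * δ ≤ u * ε := Nat.mul_le_mul_left u (le_of_lt hlt)
    have hdvd1 : d ∣ u * ε - u * δ := (Nat.modEq_iff_dvd' hle').mp h.symm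
    rw [← Nat.mul_sub] at hdvd1
    have hq := dvd_of_dvd_mul' hd hu hdvd1
    have := Nat.le_of_dvd (by omega) hq
    omega
  have hlt2 : u * ε % d < u * δ % d := lt_of_le_of_ne hle hne
  -- the key wrap identity at ε
  have hsumε : (u * δ % d + u * (ε - δ) % d) % d = u * ε % d := by
    rw [wrap]
    congr 2
    omega
  have key : u * ε % d + d = u * δ % d + u * (ε - δ) % d := by
    rcases modadd (u * δ % d) (u * (ε - δ) % d) haδ ham with ⟨h0, h⟩ | ⟨h0, h⟩ <;>
      rw [h] at hsumε <;> omega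
  -- claim: no dips strictly between δ and ε
  have hC : ∀ j, 1 ≤ j → j < ε - δ → u * δ % d ≤ u * (δ + j) % d := by
    intro j
    induction j using Nat.strong_induction_on with
    | _ j ih =>
      intro hj1 hjm
      by_contra hcon
      push_neg at hcon
      have hmem : δ + j ∈ DeltaMin d u (d / Nat.gcd d u) := by
        refine ⟨by omega, by omega, ?_⟩
        intro k hk1 hk2
        rcases le_or_gt k δ with hkδ | hkδ
        · exact le_trans (le_of_lt hcon) (hδmin k hk1 hkδ)
        · rcases eq_or_lt_of_le hk2 with heq | hlt3
          · rw [heq]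
          · have hik := ih (k - δ) (by omega) (by omega) (by omega)
            have hk' : δ + (k - δ) = k := by omega
            rw [hk'] at hik
            omega
      have := hmin (δ + j) hmem (by omega)
      omega
  refine ⟨by omega, by omega, ?_⟩
  intro j hj1 hj2
  rcases eq_or_lt_of_le hj2 with heq | hjlt
  · rw [heq]
  · have hCj := hC j hj1 hjlt
    have haj : u * j % d < d := Nat.mod_lt _ hd
    have haδj : u * (δ + j) % d < d := Nat.mod_lt _ hd
    have hsumj : (u * δ % d + u * j % d) % d = u * (δ + j) % d := wrap d u δ j
    rcases modadd (u * δ % d) (u * j % d) haδ haj with ⟨h0, h⟩ | ⟨h0, h⟩ <;>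
      rw [h] at hsumj <;> omega
end

section
/- Let d, u be positive integers with 0 < u < d, a_i = u·i mod d. If δ ∈ Δmax(d,u) and ε is the smallest element of Δmax(d,u) strictly greater than δ, then ε − δ ∈ Δmin(d,u). -/
lemma distinct_mod (d u : ℕ) (hu : 0 < u) (hud : u < d)
    {i j : ℕ} (hi : 1 ≤ i) (hij : i < j) (hj : j ≤ d / Nat.gcd d u) :
    u * i % d ≠ u * j % d := by
  intro h
  have hd : 0 < d := hu.trans hud
  have hg : 0 < Nat.gcd d u := Nat.gcd_pos_of_pos_left _ hd
  have hq : 0 < d / Nat.gcd d u := Nat.div_pos (Nat.le_of_dvd hd (Nat.gcd_dvd_left d u)) hg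
  have hdvd : d ∣ u * j - u * i :=
    (Nat.modEq_iff_dvd' (Nat.mul_le_mul_left u hij.le)).mp h
  have hdvd' : d ∣ u * (j - i) := by
    rwa [Nat.mul_sub]
  have hd_eq : Nat.gcd d u * (d / Nat.gcd d u) = d :=
    Nat.mul_div_cancel' (Nat.gcd_dvd_left d u)
  have hu_eq : Nat.gcd d u * (u / Nat.gcd d u) = u :=
    Nat.mul_div_cancel' (Nat.gcd_dvd_right d u)
  have h1 : Nat.gcd d u * (d / Nat.gcd d u) ∣ Nat.gcd d u * (u / Nat.gcd d u * (j - i)) := by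
    rw [← mul_assoc, hu_eq, hd_eq]; exact hdvd'
  have h2 : d / Nat.gcd d u ∣ u / Nat.gcd d u * (j - i) :=
    (mul_dvd_mul_iff_left hg.ne').mp h1
  have hcop : Nat.Coprime (d / Nat.gcd d u) (u / Nat.gcd d u) :=
    Nat.coprime_div_gcd_div_gcd hg
  have h3 : d / Nat.gcd d u ∣ j - i := by
    rw [mul_comm] at h2
    exact (Nat.Coprime.dvd_of_dvd_mul_right hcop) h2
  have h4 : d / Nat.gcd d u ≤ j - i := Nat.le_of_dvd (by omega) h3
  omega

theorem stmt3 (d u : ℕ) (hu : 0 < u) (hud : u < d)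
    (δ ε : ℕ) (hδ : δ ∈ DeltaMax d u (d / Nat.gcd d u))
    (hε : ε ∈ DeltaMax d u (d / Nat.gcd d u)) (hlt : δ < ε)
    (hmin : ∀ γ ∈ DeltaMax d u (d / Nat.gcd d u), δ < γ → ε ≤ γ) :
    ε - δ ∈ DeltaMin d u (d / Nat.gcd d u) := by
  have hd : 0 < d := hu.trans hud
  simp only [DeltaMax, Set.mem_setOf_eq] at hδ hε
  obtain ⟨hδ1, hδq, hδmax⟩ := hδ
  obtain ⟨hε1, hεq, hεmax⟩ := hε
  -- all indices strictly between δ and ε have value < a_δ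
  have key : ∀ k, δ < k → k < ε → u * k % d < u * δ % d := by
    intro k
    induction k using Nat.strong_induction_on with
    | _ k ih =>
      intro h1 h2
      by_contra hle
      push_neg at hle
      have hne : u * δ % d ≠ u * k % d :=
        distinct_mod d u hu hud hδ1 h1 (h2.le.trans hεq)
      have hlt' : u * δ % d < u * k % d := lt_of_le_of_ne hle hne
      have hk : k ∈ DeltaMax d u (d / Nat.gcd d u) := by
        refine ⟨by omega, by omega, fun m hm1 hmk => ?_⟩
        rcases Nat.lt_or_ge m k with hmk' | hmk'
        · rcases le_or_gt m δ with hmδ | hmδ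
          · exact (hδmax m hm1 hmδ).trans hlt'.le
          · exact ((ih m hmk' hmδ (hmk'.trans h2)).trans hlt').le
        · have hmkeq : m = k := le_antisymm hmk hmk'
          simp [hmkeq]
      exact absurd (hmin k hk h1) (not_le.mpr h2)
  have hAB : u * δ % d < u * ε % d :=
    lt_of_le_of_ne (hεmax δ hδ1 hlt.le) (distinct_mod d u hu hud hδ1 hlt hεq)
  have hsplit : u * ε = u * δ + u * (ε - δ) := by
    rw [← Nat.mul_add, Nat.add_sub_cancel' hlt.le]
  have hBmod : u * ε % d = (u * δ % d + u * (ε - δ) % d) % d := by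
    rw [hsplit, Nat.add_mod]
  have hA : u * δ % d < d := Nat.mod_lt _ hd
  have hC : u * (ε - δ) % d < d := Nat.mod_lt _ hd
  have hB : u * ε % d < d := Nat.mod_lt _ hd
  have hCval : u * (ε - δ) % d = u * ε % d - u * δ % d := by
    rcases Nat.lt_or_ge (u * δ % d + u * (ε - δ) % d) d with h | h
    · rw [Nat.mod_eq_of_lt h] at hBmod; omega
    · have h2 : (u * δ % d + u * (ε - δ) % d) % d
          = u * δ % d + u * (ε - δ) % d - d := by
        rw [Nat.mod_eq_sub_mod h, Nat.mod_eq_of_lt (by omega)]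
      rw [h2] at hBmod; omega
  simp only [DeltaMin, Set.mem_setOf_eq]
  refine ⟨by omega, by omega, fun j hj1 hj2 => ?_⟩
  rcases eq_or_lt_of_le hj2 with heq | hjlt
  · rw [heq]
  · have hkey := key (δ + j) (by omega) (by omega)
    have hsplit2 : u * (δ + j) = u * δ + u * j := by ring
    have hmod2 : u * (δ + j) % d = (u * δ % d + u * j % d) % d := by
      rw [hsplit2, Nat.add_mod]
    have hDj : u * j % d < d := Nat.mod_lt _ hd
    rcases Nat.lt_or_ge (u * δ % d + u * j % d) d with h | h
    · rw [Nat.mod_eq_of_lt h] at hmod2; omega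
    · have h2 : (u * δ % d + u * j % d) % d = u * δ % d + u * j % d - d := by
        rw [Nat.mod_eq_sub_mod h, Nat.mod_eq_of_lt (by omega)]
      rw [h2] at hmod2
      omega
end

section
/- Let d, u be positive integers with 0 < u < d, a_i = u·i mod d. If δ ∈ Δmin(d,u) and ε is the smallest element of Δmin(d,u) strictly greater than δ, then there is no element of Δmax(d,u) strictly between ε − δ and ε. -/
theorem stmt4 (d u : ℕ) (hu : 0 < u) (hud : u < d)
    (δ ε : ℕ) (hδ : δ ∈ DeltaMin d u (d / Nat.gcd d u))
    (hε : ε ∈ DeltaMin d u (d / Nat.gcd d u)) (hlt : δ < ε)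
    (hmin : ∀ γ ∈ DeltaMin d u (d / Nat.gcd d u), δ < γ → ε ≤ γ) :
    ∀ ζ ∈ DeltaMax d u (d / Nat.gcd d u), ¬(ε - δ < ζ ∧ ζ < ε) := by
  rintro ζ ⟨hζ1, hζq, hζmax⟩ ⟨h1, h2⟩
  obtain ⟨hδ1, hδq, hδmin⟩ := hδ
  obtain ⟨hε1, hεq, hεmin⟩ := hε
  have hd : 0 < d := lt_trans hu hud
  set t := ε - δ with ht
  set j := ζ - t with hj
  have htpos : 0 < t := Nat.sub_pos_of_lt hlt
  have hjpos : 0 < j := by omega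
  have hjδ : j ≤ δ := by omega
  have hεeq : ε = δ + t := by omega
  have hζeq : ζ = t + j := by omega
  -- strict inequality a_ε < a_δ
  have hEA : u * ε % d ≤ u * δ % d := hεmin δ hδ1 (le_of_lt hlt)
  have hne : u * ε % d ≠ u * δ % d := by
    intro h
    have hle : u * δ ≤ u * ε := Nat.mul_le_mul_left u (le_of_lt hlt)
    have hdvd : d ∣ u * t := by
      have hd2 : d ∣ u * ε - u * δ := (Nat.modEq_iff_dvd' hle).mp h.symm
      have heq : u * ε - u * δ = u * t := by rw [ht, Nat.mul_sub]
      rwa [heq] at hd2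
    set g := Nat.gcd d u with hg
    have hg0 : 0 < g := Nat.gcd_pos_of_pos_left u hd
    have hdg : g ∣ d := Nat.gcd_dvd_left d u
    have hug : g ∣ u := Nat.gcd_dvd_right d u
    have h1' : g * (d / g) ∣ g * ((u / g) * t) := by
      rw [Nat.mul_div_cancel' hdg, ← Nat.mul_assoc, Nat.mul_div_cancel' hug]
      exact hdvd
    have h2' : d / g ∣ (u / g) * t := (Nat.mul_dvd_mul_iff_left hg0).mp h1'
    have hcop : Nat.Coprime (d / g) (u / g) := Nat.coprime_div_gcd_div_gcd hg0
    have h3' : d / g ∣ t := hcop.dvd_of_dvd_mul_left h2'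
    have h4' : d / g ≤ t := Nat.le_of_dvd htpos h3'
    omega
  -- mod decompositions
  have hmodE : u * ε % d = (u * δ % d + u * t % d) % d := by
    rw [hεeq, Nat.mul_add, Nat.add_mod]
  have hmodZ : u * ζ % d = (u * t % d + u * j % d) % d := by
    rw [hζeq, Nat.mul_add, Nat.add_mod]
  have hA : u * δ % d < d := Nat.mod_lt _ hd
  have hB : u * t % d < d := Nat.mod_lt _ hd
  have hC : u * j % d < d := Nat.mod_lt _ hd
  have hZ : u * ζ % d < d := Nat.mod_lt _ hd
  have hEcase : u * ε % d = u * δ % d + u * t % d ∨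
      u * ε % d + d = u * δ % d + u * t % d := by
    rcases Nat.lt_or_ge (u * δ % d + u * t % d) d with h | h
    · left; rw [hmodE, Nat.mod_eq_of_lt h]
    · right
      rw [hmodE, Nat.mod_eq_sub_mod h, Nat.mod_eq_of_lt (by omega)]
      omega
  have hZcase : u * ζ % d = u * t % d + u * j % d ∨
      u * ζ % d + d = u * t % d + u * j % d := by
    rcases Nat.lt_or_ge (u * t % d + u * j % d) d with h | h
    · left; rw [hmodZ, Nat.mod_eq_of_lt h]
    · right
      rw [hmodZ, Nat.mod_eq_sub_mod h, Nat.mod_eq_of_lt (by omega)]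
      omega
  have hAC : u * δ % d ≤ u * j % d := hδmin j hjpos hjδ
  have hBZ : u * t % d ≤ u * ζ % d := hζmax t htpos (by omega)
  omega
end

section
/- Let d, u be positive integers with 0 < u < d, a_i = u·i mod d. Suppose δ ∈ Δmin(d,u), ε is the smallest element of Δmin(d,u) strictly greater than δ, and ζ ∈ Δmax(d,u) satisfies δ < ζ < ε. Then ζ − δ ∈ Δmax(d,u). -/
theorem stmt5 (d u : ℕ) (hu : 0 < u) (hud : u < d)
    (δ ε ζ : ℕ) (hδ : δ ∈ DeltaMin d u (d / Nat.gcd d u))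
    (hε : ε ∈ DeltaMin d u (d / Nat.gcd d u)) (hlt : δ < ε)
    (hmin : ∀ γ ∈ DeltaMin d u (d / Nat.gcd d u), δ < γ → ε ≤ γ)
    (hζ : ζ ∈ DeltaMax d u (d / Nat.gcd d u)) (h1 : δ < ζ) (h2 : ζ < ε) :
    ζ - δ ∈ DeltaMax d u (d / Nat.gcd d u) := by
  obtain ⟨hδ1, hδq, hδmin⟩ := hδ
  obtain ⟨hε1, hεq, hεmin⟩ := hε
  obtain ⟨hζ1, hζq, hζmax⟩ := hζ
  have hd : 0 < d := lt_trans hu hud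
  have key : ∀ j, δ < j → j < ε → u * δ % d < u * j % d := by
    intro j
    induction j using Nat.strong_induction_on with
    | _ j ih =>
      intro hδj hjε
      by_contra hle
      push_neg at hle
      have hmem : j ∈ DeltaMin d u (d / Nat.gcd d u) := by
        refine ⟨by omega, by omega, ?_⟩
        intro k hk1 hkj
        rcases le_or_gt k δ with h | h
        · exact le_trans hle (hδmin k hk1 h)
        · rcases eq_or_lt_of_le hkj with rfl | hkj'
          · exact le_rfl
          · exact le_trans hle (le_of_lt (ih k hkj' h (lt_trans hkj' hjε)))
      have := hmin j hmem hδj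
      omega
  have cong : ∀ j, (u * j % d + u * δ % d) % d = u * (j + δ) % d := by
    intro j
    conv_rhs => rw [Nat.mul_add, Nat.add_mod]
  have modcase : ∀ x y : ℕ, x < d → y < d →
      (x + y) % d = x + y ∨ (x + y) % d = x + y - d := by
    intro x y hx hy
    rcases lt_or_ge (x + y) d with h | h
    · left; exact Nat.mod_eq_of_lt h
    · right
      rw [Nat.mod_eq_sub_mod h, Nat.mod_eq_of_lt (by omega)]
  have hAζ : u * δ % d < u * ζ % d := key ζ h1 h2
  have hXd : u * (ζ - δ) % d < d := Nat.mod_lt _ hd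
  have hDd : u * δ % d < d := Nat.mod_lt _ hd
  have hZd : u * ζ % d < d := Nat.mod_lt _ hd
  have h3 : (u * (ζ - δ) % d + u * δ % d) % d = u * ζ % d := by
    rw [cong]; congr 2; omega
  have hX : u * (ζ - δ) % d = u * ζ % d - u * δ % d := by
    rcases modcase _ _ hXd hDd with h | h <;> omega
  refine ⟨by omega, by omega, ?_⟩
  intro j hj1 hj2
  have hjd : u * j % d < d := Nat.mod_lt _ hd
  have hup : u * (j + δ) % d ≤ u * ζ % d := hζmax (j + δ) (by omega) (by omega)
  have hlow : u * δ % d < u * (j + δ) % d := key (j + δ) (by omega) (by omega)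
  have h4 : (u * j % d + u * δ % d) % d = u * (j + δ) % d := cong j
  rcases modcase _ _ hjd hDd with h | h <;> omega
end

section
/- Let d, u be positive integers with 0 < u < d, a_i = u·i mod d. Suppose i ∈ {1,...,q}, δ is the largest index j ≤ i with a_j = max{a_1,...,a_i}, and θ is the largest index j ≤ i with a_j = min{a_1,...,a_i}. If δ + θ ≤ q, then δ + θ ∈ Δmax(d,u) ∪ Δmin(d,u), and there is no element of Δmax(d,u) ∪ Δmin(d,u) strictly between max(δ,θ) and δ + θ. -/
lemma vals_distinct (d u : ℕ) (hu : 0 < u) (hud : u < d)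
    (j k : ℕ) (hj : 1 ≤ j) (hjk : j < k) (hk : k ≤ d / Nat.gcd d u) :
    u * j % d ≠ u * k % d := by
  intro h
  have hd : 0 < d := lt_trans hu hud
  have hg : 0 < Nat.gcd d u := Nat.gcd_pos_of_pos_left u hd
  have hdvd : d ∣ u * (k - j) := by
    rw [Nat.mul_sub]
    exact (Nat.modEq_iff_dvd' (Nat.mul_le_mul_left u hjk.le)).mp h
  have hcop : Nat.Coprime (d / Nat.gcd d u) (u / Nat.gcd d u) :=
    Nat.coprime_div_gcd_div_gcd hg
  have h2 : Nat.gcd d u * (d / Nat.gcd d u) ∣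
      Nat.gcd d u * (u / Nat.gcd d u * (k - j)) := by
    rw [Nat.mul_div_cancel' (Nat.gcd_dvd_left d u), ← Nat.mul_assoc,
      Nat.mul_div_cancel' (Nat.gcd_dvd_right d u)]
    exact hdvd
  have h3 : d / Nat.gcd d u ∣ u / Nat.gcd d u * (k - j) :=
    (mul_dvd_mul_iff_left hg.ne').mp h2
  have h4 : d / Nat.gcd d u ∣ k - j := hcop.dvd_of_dvd_mul_left h3
  have h5 : d / Nat.gcd d u ≤ k - j := Nat.le_of_dvd (by omega) h4
  omega

lemma uq_mod (d u : ℕ) (hud : u < d) :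
    u * (d / Nat.gcd d u) % d = 0 := by
  have h : u * (d / Nat.gcd d u) = d * (u / Nat.gcd d u) := by
    rw [← Nat.mul_div_assoc u (Nat.gcd_dvd_left d u), Nat.mul_comm u d,
      Nat.mul_div_assoc d (Nat.gcd_dvd_right d u)]
  rw [h, Nat.mul_mod_right]

theorem stmt6 (d u : ℕ) (hu : 0 < u) (hud : u < d)
    (i δ θ : ℕ) (hi1 : 1 ≤ i) (hiq : i ≤ d / Nat.gcd d u)
    -- δ is the largest index j ≤ i with a_j = max{a_1,...,a_i}
    (hδ1 : 1 ≤ δ) (hδi : δ ≤ i)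
    (hδmax : ∀ j, 1 ≤ j → j ≤ i → u * j % d ≤ u * δ % d)
    (hδlast : ∀ j, 1 ≤ j → j ≤ i → u * j % d = u * δ % d → j ≤ δ)
    -- θ is the largest index j ≤ i with a_j = min{a_1,...,a_i}
    (hθ1 : 1 ≤ θ) (hθi : θ ≤ i)
    (hθmin : ∀ j, 1 ≤ j → j ≤ i → u * θ % d ≤ u * j % d)
    (hθlast : ∀ j, 1 ≤ j → j ≤ i → u * j % d = u * θ % d → j ≤ θ)
    (hsum : δ + θ ≤ d / Nat.gcd d u) :
    (δ + θ ∈ DeltaMax d u (d / Nat.gcd d u) ∪ DeltaMin d u (d / Nat.gcd d u)) ∧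
    ∀ lam ∈ DeltaMax d u (d / Nat.gcd d u) ∪ DeltaMin d u (d / Nat.gcd d u),
      ¬(max δ θ < lam ∧ lam < δ + θ) := by
  have hd : 0 < d := lt_trans hu hud
  set q := d / Nat.gcd d u with hq
  set A := u * δ % d with hA
  set B := u * θ % d with hB
  have hAd : A < d := Nat.mod_lt _ hd
  have hBA : B ≤ A := hδmax θ hθ1 hθi
  -- B > 0 : θ < q and a_q = 0
  have hθq : θ < q := by omega
  have hBpos : 0 < B := by
    rcases Nat.eq_zero_or_pos B with h0 | h
    · exact absurd (h0.trans (uq_mod d u hud).symm) (vals_distinct d u hu hud θ q hθ1 hθq le_rfl)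
    · exact h
  -- key lemma: between max δ θ and δ + θ the values are strictly between B and A
  have key : ∀ m, max δ θ < m → m < δ + θ → B < u * m % d ∧ u * m % d < A := by
    intro m h1 h2
    have hmθ1 : 1 ≤ m - θ := by omega
    have hmθi : m - θ ≤ i := by omega
    have hmδ1 : 1 ≤ m - δ := by omega
    have hmδi : m - δ ≤ i := by omega
    set x := u * (m - θ) % d with hx
    set y := u * (m - δ) % d with hy
    have hx1 : B ≤ x := hθmin _ hmθ1 hmθi
    have hx2 : x ≤ A := hδmax _ hmθ1 hmθi
    have hxA : x ≠ A := vals_distinct d u hu hud (m - θ) δ hmθ1 (by omega) (by omega)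
    have hy1 : B ≤ y := hθmin _ hmδ1 hmδi
    have hy2 : y ≤ A := hδmax _ hmδ1 hmδi
    have hyB : y ≠ B := fun h =>
      vals_distinct d u hu hud (m - δ) θ hmδ1 (by omega) (by omega) h
    have hm1 : u * m % d = (x + B) % d := by
      conv_lhs => rw [show m = (m - θ) + θ by omega]
      rw [Nat.mul_add, Nat.add_mod]
    have hm2 : u * m % d = (y + A) % d := by
      conv_lhs => rw [show m = (m - δ) + δ by omega]
      rw [Nat.mul_add, Nat.add_mod]
    have hxd : x < d := Nat.mod_lt _ hd
    have hyd : y < d := Nat.mod_lt _ hd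
    rcases Nat.lt_or_ge (x + B) d with e1 | e1
    · rw [Nat.mod_eq_of_lt e1] at hm1
      rcases Nat.lt_or_ge (y + A) d with e2 | e2
      · rw [Nat.mod_eq_of_lt e2] at hm2
        omega
      · rw [Nat.mod_eq_sub_mod e2,
          Nat.mod_eq_of_lt (show y + A - d < d by omega)] at hm2
        omega
    · rw [Nat.mod_eq_sub_mod e1,
        Nat.mod_eq_of_lt (show x + B - d < d by omega)] at hm1
      rcases Nat.lt_or_ge (y + A) d with e2 | e2
      · rw [Nat.mod_eq_of_lt e2] at hm2
        omega
      · rw [Nat.mod_eq_sub_mod e2,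
          Nat.mod_eq_of_lt (show y + A - d < d by omega)] at hm2
        omega
  have hval : u * (δ + θ) % d = (A + B) % d := by
    rw [Nat.mul_add, Nat.add_mod]
  constructor
  · rcases Nat.lt_or_ge (A + B) d with hc | hc
    · -- new maximum
      left
      rw [Nat.mod_eq_of_lt hc] at hval
      refine ⟨by omega, hsum, fun j hj1 hj2 => ?_⟩
      rw [hval]
      rcases Nat.lt_or_ge j (δ + θ) with hjlt | hjlt
      · rcases le_or_gt j i with hji | hji
        · have := hδmax j hj1 hji
          omega
        · have := key j (by omega) hjlt
          omega
      · have : j = δ + θ := by omega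
        rw [this, hval]
    · -- new minimum
      right
      have hc2 : A + B - d < d := by omega
      rw [Nat.mod_eq_sub_mod hc, Nat.mod_eq_of_lt hc2] at hval
      refine ⟨by omega, hsum, fun j hj1 hj2 => ?_⟩
      rw [hval]
      rcases Nat.lt_or_ge j (δ + θ) with hjlt | hjlt
      · rcases le_or_gt j i with hji | hji
        · have := hθmin j hj1 hji
          omega
        · have := key j (by omega) hjlt
          omega
      · have : j = δ + θ := by omega
        rw [this, hval]
  · rintro lam hlam ⟨h1, h2⟩
    obtain ⟨hkey1, hkey2⟩ := key lam h1 h2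
    rcases hlam with hmax | hmin
    · obtain ⟨-, -, hprop⟩ := hmax
      have := hprop δ hδ1 (by omega)
      omega
    · obtain ⟨-, -, hprop⟩ := hmin
      have := hprop θ hθ1 (by omega)
      omega
end

section
/- Let d₁, d₂, u₁, u₂ be positive integers with 0 < u₁ < d₁ and 0 < u₂ < d₂, and b_j^(k) = ⌊u_k·j/d_k⌋. Let i > 1 be the smallest integer with b_i^(1) − b_{i−1}^(1) = b_i^(2) − b_{i−1}^(2). Then for all j with 1 ≤ j < i, one has b_j^(1) + b_j^(2) = j − 1. -/
theorem stmt8 (d1 d2 u1 u2 : ℕ) (hu1 : 0 < u1) (h1 : u1 < d1)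
    (hu2 : 0 < u2) (h2 : u2 < d2)
    (i : ℕ) (hi : 1 < i)
    (heq : u1 * i / d1 - u1 * (i - 1) / d1 = u2 * i / d2 - u2 * (i - 1) / d2)
    (hminimal : ∀ i', 1 < i' → i' < i →
      u1 * i' / d1 - u1 * (i' - 1) / d1 ≠ u2 * i' / d2 - u2 * (i' - 1) / d2) :
    ∀ j, 1 ≤ j → j < i → u1 * j / d1 + u2 * j / d2 = j - 1 := by
  intro j hj1 hji
  induction j with
  | zero => omega
  | succ n ih =>
    rcases Nat.lt_or_ge n 1 with h | hn1
    · have hn0 : n = 0 := by omega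
      subst hn0
      simp [Nat.div_eq_of_lt h1, Nat.div_eq_of_lt h2]
    · have hni : n < i := by omega
      have ihn := ih hn1 hni
      have hne := hminimal (n + 1) (by omega) hji
      simp only [Nat.add_sub_cancel] at hne
      have A1 : u1 * (n + 1) / d1 ≤ u1 * n / d1 + 1 := by
        have hb : u1 * (n + 1) ≤ u1 * n + d1 := by nlinarith
        calc u1 * (n + 1) / d1 ≤ (u1 * n + d1) / d1 := Nat.div_le_div_right hb
          _ = u1 * n / d1 + 1 := Nat.add_div_right _ (by omega)
      have A2 : u2 * (n + 1) / d2 ≤ u2 * n / d2 + 1 := by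
        have hb : u2 * (n + 1) ≤ u2 * n + d2 := by nlinarith
        calc u2 * (n + 1) / d2 ≤ (u2 * n + d2) / d2 := Nat.div_le_div_right hb
          _ = u2 * n / d2 + 1 := Nat.add_div_right _ (by omega)
      have M1 : u1 * n / d1 ≤ u1 * (n + 1) / d1 :=
        Nat.div_le_div_right (by nlinarith)
      have M2 : u2 * n / d2 ≤ u2 * (n + 1) / d2 :=
        Nat.div_le_div_right (by nlinarith)
      omega
end

section
/- Let d, u be positive integers with 0 < u < d and set d₁ = d₂ = d, u₁ = u, u₂ = d − u. Define b_j^(1) = ⌊uj/d⌋ and b_j^(2) = ⌊(d−u)j/d⌋. Then t = d/gcd(d,u) is the smallest integer i > 1 satisfying b_i^(1) − b_{i−1}^(1) = b_i^(2) − b_{i−1}^(2). -/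
private lemma sum_div_aux (d a b i : ℕ) (hd : 0 < d) (h : a + b = d * i) (hnd : ¬ d ∣ a) :
    a / d + b / d + 1 = i := by
  have ha := Nat.div_add_mod a d
  have hb := Nat.div_add_mod b d
  have hra : a % d < d := Nat.mod_lt _ hd
  have hrb : b % d < d := Nat.mod_lt _ hd
  have hra0 : a % d ≠ 0 := fun h0 => hnd (Nat.dvd_of_mod_eq_zero h0)
  set qa := a / d
  set qb := b / d
  have key : d * (qa + qb) + (a % d + b % d) = d * i := by rw [Nat.mul_add]; omega
  have h1 : qa + qb < i := by
    by_contra hc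
    push_neg at hc
    have h3 := Nat.mul_le_mul_left d hc
    omega
  have h2 : i < qa + qb + 2 := by
    by_contra hc
    push_neg at hc
    have h3 := Nat.mul_le_mul_left d hc
    have h4 : d * (qa + qb + 2) = d * (qa + qb) + 2 * d := by ring
    omega
  omega

private lemma div_aux (g a b : ℕ) (hg : 0 < g) (ha : 0 < a) (hab : a < b) :
    g * a * b / (g * b) = a ∧ g * a * (b - 1) / (g * b) = a - 1 := by
  have hgb : 0 < g * b := Nat.mul_pos hg (lt_trans ha hab)
  constructor
  · have h : g * a * b = a * (g * b) := by ring
    rw [h, Nat.mul_div_cancel _ hgb]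
  · have h1 : 1 ≤ a := ha
    have h2 : g * a ≤ g * b := Nat.mul_le_mul_left g (le_of_lt hab)
    have h3 : 1 ≤ b := le_of_lt (lt_of_le_of_lt ha hab)
    have heq : g * a * (b - 1) = (g * b - g * a) + (g * b) * (a - 1) := by
      zify [h1, h2, h3]; ring
    have hga : 0 < g * a := Nat.mul_pos hg ha
    rw [heq, Nat.add_mul_div_left _ _ hgb,
      Nat.div_eq_of_lt (by omega : g * b - g * a < g * b)]
    omega

theorem stmt10 (d u : ℕ) (hu : 0 < u) (hud : u < d) :
    (1 < d / Nat.gcd d u ∧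
      u * (d / Nat.gcd d u) / d - u * (d / Nat.gcd d u - 1) / d =
        (d - u) * (d / Nat.gcd d u) / d - (d - u) * (d / Nat.gcd d u - 1) / d) ∧
    ∀ i, 1 < i → i < d / Nat.gcd d u →
      u * i / d - u * (i - 1) / d ≠ (d - u) * i / d - (d - u) * (i - 1) / d := by
  have hd : 0 < d := lt_trans hu hud
  set g := Nat.gcd d u with hg
  have hgpos : 0 < g := Nat.gcd_pos_of_pos_left u hd
  obtain ⟨d', hd'⟩ : g ∣ d := Nat.gcd_dvd_left d u
  obtain ⟨u', hu'⟩ : g ∣ u := Nat.gcd_dvd_right d u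
  have ht : d / g = d' := by rw [hd', Nat.mul_div_cancel_left _ hgpos]
  have hu'pos : 0 < u' := by
    rcases Nat.eq_zero_or_pos u' with h | h
    · rw [h, Nat.mul_zero] at hu'; omega
    · exact h
  have hu'd' : u' < d' := by
    by_contra hc
    push_neg at hc
    have := Nat.mul_le_mul_left g hc
    omega
  set v' := d' - u' with hv'
  have hv'pos : 0 < v' := by omega
  have hv'd' : v' < d' := by omega
  have hdu : d - u = g * v' := by
    rw [hd', hu', hv']
    zify [le_of_lt hu'd', le_of_lt hud, (show g * u' ≤ g * d' from
      Nat.mul_le_mul_left g (le_of_lt hu'd'))]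
    ring
  have hco : Nat.Coprime d' u' := by
    have hc := Nat.coprime_div_gcd_div_gcd (show 0 < Nat.gcd d u from hgpos)
    rw [← hg, ht] at hc
    have hu'' : u / g = u' := by rw [hu', Nat.mul_div_cancel_left _ hgpos]
    rwa [hu''] at hc
  have hndvd : ∀ j, 0 < j → j < d' → ¬ d ∣ u * j := by
    intro j hj1 hj2 hdvd
    have hdvd' : d' ∣ u' * j := by
      rw [hd', hu'] at hdvd
      exact (Nat.mul_dvd_mul_iff_left hgpos).mp (by rwa [Nat.mul_assoc] at hdvd)
    have hdj : d' ∣ j :=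
      Nat.Coprime.dvd_of_dvd_mul_left hco hdvd'
    have := Nat.le_of_dvd hj1 hdj
    omega
  constructor
  · constructor
    · rw [ht]; omega
    · have H1 := div_aux g u' d' hgpos hu'pos hu'd'
      have H2 := div_aux g v' d' hgpos hv'pos hv'd'
      rw [ht, hdu]
      rw [show u * d' = g * u' * d' by rw [hu'], show d = g * d' from hd',
        show u * (d' - 1) = g * u' * (d' - 1) by rw [hu'],
        show g * v' * d' = g * v' * d' from rfl]
      rw [H1.1, H1.2, H2.1, H2.2]
      omega
  · intro i h1 h2 heq
    rw [ht] at h2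
    have e1 : u * i + (d - u) * i = d * i := by
      rw [← Nat.add_mul, Nat.add_sub_cancel' (le_of_lt hud)]
    have e2 : u * (i - 1) + (d - u) * (i - 1) = d * (i - 1) := by
      rw [← Nat.add_mul, Nat.add_sub_cancel' (le_of_lt hud)]
    have s1 := sum_div_aux d (u * i) ((d - u) * i) i hd e1 (hndvd i (by omega) h2)
    have s2 := sum_div_aux d (u * (i - 1)) ((d - u) * (i - 1)) (i - 1) hd e2
      (hndvd (i - 1) (by omega) (by omega))
    have m1 : u * (i - 1) / d ≤ u * i / d :=
      Nat.div_le_div_right (Nat.mul_le_mul_left _ (by omega))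
    have m2 : (d - u) * (i - 1) / d ≤ (d - u) * i / d :=
      Nat.div_le_div_right (Nat.mul_le_mul_left _ (by omega))
    omega
end

section
/- Let d₁, d₂, u₁, u₂ be positive integers with 0 < u₁ < d₁, 0 < u₂ < d₂. Let a_j^(k) = u_k·j mod d_k and b_j^(k) = ⌊u_k·j/d_k⌋. Let i be minimal with b_i^(1) − b_{i−1}^(1) = b_i^(2) − b_{i−1}^(2) and q = min(d₁/gcd(d₁,u₁), d₂/gcd(d₂,u₂)). For j < min(i,q): a_j^(1) = max{a_1^(1),...,a_j^(1)} if and only if a_j^(2) = min{a_1^(2),...,a_j^(2)}. -/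
/-- Distinctness of residues within one period. -/
lemma stmt13_mod_ne (d u l j : ℕ) (hu : 0 < u) (hud : u < d) (hlj : l < j)
    (hj : j < d / Nat.gcd d u) : u * l % d ≠ u * j % d := by
  intro h
  have hd : 0 < d := lt_trans hu hud
  have hle : u * l ≤ u * j := Nat.mul_le_mul_left u hlj.le
  have hdvd : d ∣ u * j - u * l := (Nat.modEq_iff_dvd' hle).mp h
  rw [← Nat.mul_sub] at hdvd
  set g := Nat.gcd d u with hg
  have hgpos : 0 < g := Nat.gcd_pos_of_pos_left u hd
  have hgd : g ∣ d := Nat.gcd_dvd_left d u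
  have hgu : g ∣ u := Nat.gcd_dvd_right d u
  have hcop : Nat.Coprime (d / g) (u / g) := Nat.coprime_div_gcd_div_gcd hgpos
  have hdvd2 : d / g ∣ (u / g) * (j - l) := by
    have h1 : g * (d / g) ∣ g * ((u / g) * (j - l)) := by
      rw [Nat.mul_div_cancel' hgd, ← Nat.mul_assoc, Nat.mul_div_cancel' hgu]
      exact hdvd
    exact (Nat.mul_dvd_mul_iff_left hgpos).mp h1
  have hdvd3 : d / g ∣ j - l := hcop.dvd_of_dvd_mul_left hdvd2
  have : d / g ≤ j - l := Nat.le_of_dvd (by omega) hdvd3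
  omega

/-- Key arithmetic lemma about floors and residues of a sum. -/
lemma stmt13_key (d Y Z : ℕ) (hd : 0 < d) (hne : Y % d ≠ (Y + Z) % d) :
    (Y % d < (Y + Z) % d ↔ (Y + Z) / d = Y / d + Z / d) ∧
    ((Y + Z) % d < Y % d ↔ (Y + Z) / d = Y / d + Z / d + 1) := by
  have hadd := Nat.add_div hd (a := Y) (b := Z)
  have hmod := Nat.add_mod Y Z d
  have hY : Y % d < d := Nat.mod_lt Y hd
  have hZ : Z % d < d := Nat.mod_lt Z hd
  split_ifs at hadd with hc
  · have h2 : (Y % d + Z % d) % d = Y % d + Z % d - d := by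
      rw [Nat.mod_eq_sub_mod hc]; exact Nat.mod_eq_of_lt (by omega)
    omega
  · have h2 : (Y % d + Z % d) % d = Y % d + Z % d := Nat.mod_eq_of_lt (by omega)
    omega

theorem stmt13 (d1 d2 u1 u2 : ℕ) (hu1 : 0 < u1) (h1 : u1 < d1)
    (hu2 : 0 < u2) (h2 : u2 < d2)
    (i : ℕ) (hi : 1 < i)
    (heq : u1 * i / d1 - u1 * (i - 1) / d1 = u2 * i / d2 - u2 * (i - 1) / d2)
    (hminimal : ∀ i', 1 < i' → i' < i →
      u1 * i' / d1 - u1 * (i' - 1) / d1 ≠ u2 * i' / d2 - u2 * (i' - 1) / d2) :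
    ∀ j, 1 ≤ j → j < min i (min (d1 / Nat.gcd d1 u1) (d2 / Nat.gcd d2 u2)) →
      ((∀ l, 1 ≤ l → l ≤ j → u1 * l % d1 ≤ u1 * j % d1) ↔
       (∀ l, 1 ≤ l → l ≤ j → u2 * j % d2 ≤ u2 * l % d2)) := by
  have hd1 : 0 < d1 := lt_trans hu1 h1
  have hd2 : 0 < d2 := lt_trans hu2 h2
  -- complementary jumps: B1 m + B2 m + 1 = m for 1 ≤ m < i
  have sumB : ∀ m, 1 ≤ m → m < i → u1 * m / d1 + u2 * m / d2 + 1 = m := by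
    intro m hm
    induction m with
    | zero => omega
    | succ n ih =>
      intro hni
      rcases Nat.eq_or_lt_of_le hm with h | h
      · -- n + 1 = 1
        have hn0 : n = 0 := by omega
        subst hn0
        simp [Nat.div_eq_of_lt h1, Nat.div_eq_of_lt h2]
      · -- n ≥ 1
        have hn1 : 1 ≤ n := by omega
        have ihn := ih hn1 (by omega)
        have hmin := hminimal (n + 1) (by omega) hni
        simp only [Nat.add_sub_cancel] at hmin
        -- monotonicity
        have mono1 : u1 * n / d1 ≤ u1 * (n + 1) / d1 :=
          Nat.div_le_div_right (Nat.mul_le_mul_left u1 (Nat.le_succ n))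
        have mono2 : u2 * n / d2 ≤ u2 * (n + 1) / d2 :=
          Nat.div_le_div_right (Nat.mul_le_mul_left u2 (Nat.le_succ n))
        -- jumps at most 1
        have jump1 : u1 * (n + 1) / d1 ≤ u1 * n / d1 + 1 := by
          have e : u1 * (n + 1) = u1 * n + u1 := by ring
          calc u1 * (n + 1) / d1 ≤ (u1 * n + d1) / d1 := by
                rw [e]; exact Nat.div_le_div_right (by omega)
            _ = u1 * n / d1 + 1 := Nat.add_div_right _ hd1
        have jump2 : u2 * (n + 1) / d2 ≤ u2 * n / d2 + 1 := by
          have e : u2 * (n + 1) = u2 * n + u2 := by ring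
          calc u2 * (n + 1) / d2 ≤ (u2 * n + d2) / d2 := by
                rw [e]; exact Nat.div_le_div_right (by omega)
            _ = u2 * n / d2 + 1 := Nat.add_div_right _ hd2
        omega
  intro j hj1 hj2
  rw [lt_min_iff, lt_min_iff] at hj2
  obtain ⟨hji, hjq1, hjq2⟩ := hj2
  -- pointwise equivalence
  have point : ∀ l, 1 ≤ l → l < j →
      (u1 * l % d1 < u1 * j % d1 ↔ u2 * j % d2 < u2 * l % d2) := by
    intro l hl1 hlj
    have hne1 : u1 * l % d1 ≠ u1 * j % d1 := stmt13_mod_ne d1 u1 l j hu1 h1 hlj hjq1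
    have hne2 : u2 * l % d2 ≠ u2 * j % d2 := stmt13_mod_ne d2 u2 l j hu2 h2 hlj hjq2
    have e1 : u1 * j = u1 * l + u1 * (j - l) := by
      rw [← Nat.mul_add]; congr 1; omega
    have e2 : u2 * j = u2 * l + u2 * (j - l) := by
      rw [← Nat.mul_add]; congr 1; omega
    have key1 := stmt13_key d1 (u1 * l) (u1 * (j - l)) hd1 (by rw [← e1]; exact hne1)
    have key2 := stmt13_key d2 (u2 * l) (u2 * (j - l)) hd2 (by rw [← e2]; exact hne2)
    rw [← e1] at key1
    rw [← e2] at key2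
    have s1 := sumB j hj1 hji
    have s2 := sumB l hl1 (by omega)
    have s3 := sumB (j - l) (by omega) (by omega)
    obtain ⟨k1a, k1b⟩ := key1
    obtain ⟨k2a, k2b⟩ := key2
    omega
  constructor
  · intro h l hl1 hlj
    rcases Nat.eq_or_lt_of_le hlj with he | hlt
    · subst he; exact le_refl _
    · have := (point l hl1 hlt).mp
        (lt_of_le_of_ne (h l hl1 hlj) (stmt13_mod_ne d1 u1 l j hu1 h1 hlt hjq1))
      omega
  · intro h l hl1 hlj
    rcases Nat.eq_or_lt_of_le hlj with he | hlt
    · subst he; exact le_refl _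
    · have := (point l hl1 hlt).mpr
        (lt_of_le_of_ne (h l hl1 hlj) (Ne.symm (stmt13_mod_ne d2 u2 l j hu2 h2 hlt hjq2)))
      omega
end

section
/- Let d₁, d₂, u₁, u₂ be positive integers with 0 < u₁ < d₁, 0 < u₂ < d₂, φ : ℕ³ → ℕ² the monoid map sending (x₀,x₁,x₂) to (d₁x₀ + u₁x₁, u₂x₁ + d₂x₂). For every t with 1 ≤ t < k := lcm(d₁/gcd(d₁,u₁), d₂/gcd(d₂,u₂)), the restriction of φ to {(x₀,x₁,x₂) ∈ ℕ³ : x₀+x₁+x₂ = t} is injective. -/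
lemma dvd_of_factor (d u m : ℕ) (hd : 0 < d) (hu : 0 < u) (hdvd : d ∣ u * m) :
    d / Nat.gcd d u ∣ m := by
  set g := Nat.gcd d u with hg
  have gpos : 0 < g := Nat.gcd_pos_of_pos_left _ hd
  have hp' : g * (d / g) = d := Nat.mul_div_cancel' (Nat.gcd_dvd_left d u)
  have hq' : g * (u / g) = u := Nat.mul_div_cancel' (Nat.gcd_dvd_right d u)
  have hco : Nat.Coprime (d / g) (u / g) := Nat.coprime_div_gcd_div_gcd gpos
  have hpm : d / g ∣ (u / g) * m := by
    have h2 : g * (d / g) ∣ g * ((u / g) * m) := by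
      rw [hp', ← mul_assoc, hq']; exact hdvd
    exact (Nat.mul_dvd_mul_iff_left gpos).mp h2
  exact (Nat.Coprime.dvd_of_dvd_mul_left hco hpm)

lemma aux15 (d1 d2 u1 u2 : ℕ) (hu1 : 0 < u1) (h1 : u1 < d1)
    (hu2 : 0 < u2) (h2 : u2 < d2)
    (t : ℕ)
    (htk : t < Nat.lcm (d1 / Nat.gcd d1 u1) (d2 / Nat.gcd d2 u2))
    (a b c a' b' c' : ℕ) (hx : a + b + c = t) (hy : a' + b' + c' = t)
    (e1 : d1 * a + u1 * b = d1 * a' + u1 * b')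
    (e2 : u2 * b + d2 * c = u2 * b' + d2 * c')
    (hbb : b' ≤ b) : b = b' := by
  by_contra hne
  set m := b - b' with hm
  have hmpos : 0 < m := by omega
  have hb : b = b' + m := by omega
  rw [hb, Nat.mul_add] at e1 e2
  have e1' : d1 * a + u1 * m = d1 * a' := by omega
  have e2' : u2 * m + d2 * c = d2 * c' := by omega
  have ha : a ≤ a' := by
    have : d1 * a ≤ d1 * a' := by omega
    exact Nat.le_of_mul_le_mul_left this (by omega)
  have hc : c ≤ c' := by
    have : d2 * c ≤ d2 * c' := by omega
    exact Nat.le_of_mul_le_mul_left this (by omega)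
  have hd1 : d1 ∣ u1 * m := by
    obtain ⟨s, hs⟩ := Nat.exists_eq_add_of_le ha
    refine ⟨s, ?_⟩
    rw [hs, Nat.mul_add] at e1'
    omega
  have hd2 : d2 ∣ u2 * m := by
    obtain ⟨s, hs⟩ := Nat.exists_eq_add_of_le hc
    refine ⟨s, ?_⟩
    rw [hs, Nat.mul_add] at e2'
    omega
  have hdvd1 : d1 / Nat.gcd d1 u1 ∣ m := dvd_of_factor d1 u1 m (by omega) hu1 hd1
  have hdvd2 : d2 / Nat.gcd d2 u2 ∣ m := dvd_of_factor d2 u2 m (by omega) hu2 hd2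
  have hlcm : Nat.lcm (d1 / Nat.gcd d1 u1) (d2 / Nat.gcd d2 u2) ∣ m :=
    Nat.lcm_dvd hdvd1 hdvd2
  have hle := Nat.le_of_dvd hmpos hlcm
  omega

theorem stmt15 (d1 d2 u1 u2 : ℕ) (hu1 : 0 < u1) (h1 : u1 < d1)
    (hu2 : 0 < u2) (h2 : u2 < d2)
    (t : ℕ) (ht1 : 1 ≤ t)
    (htk : t < Nat.lcm (d1 / Nat.gcd d1 u1) (d2 / Nat.gcd d2 u2)) :
    ∀ x y : ℕ × ℕ × ℕ,
      x.1 + x.2.1 + x.2.2 = t → y.1 + y.2.1 + y.2.2 = t →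
      (d1 * x.1 + u1 * x.2.1, u2 * x.2.1 + d2 * x.2.2) =
        (d1 * y.1 + u1 * y.2.1, u2 * y.2.1 + d2 * y.2.2) →
      x = y := by
  rintro ⟨a, b, c⟩ ⟨a', b', c'⟩ hx hy heq
  simp only [Prod.mk.injEq] at heq ⊢
  obtain ⟨e1, e2⟩ := heq
  simp only at hx hy e1 e2
  have hbb : b = b' := by
    rcases le_total b' b with h | h
    · exact aux15 d1 d2 u1 u2 hu1 h1 hu2 h2 t htk a b c a' b' c' hx hy e1 e2 h
    · exact (aux15 d1 d2 u1 u2 hu1 h1 hu2 h2 t htk a' b' c' a b c hy hx e1.symm e2.symm h).symm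
  subst hbb
  have ha : a = a' := Nat.eq_of_mul_eq_mul_left (by omega) (by omega : d1 * a = d1 * a')
  have hc : c = c' := Nat.eq_of_mul_eq_mul_left (by omega) (by omega : d2 * c = d2 * c')
  exact ⟨ha, rfl, hc⟩
end

section
/- Let d, u be positive integers with 0 < u < d, a_j = uj mod d, Δmax and Δmin as before, and q = d/gcd(d,u). Then 1 ∈ Δmax ∩ Δmin, and for every j ∈ {2,...,q−1}, j ∈ Δmax ∪ Δmin implies j can be written as δ + θ where δ is the largest element of Δmax below j and θ is the largest element of Δmin below j. -/
lemma qdvd {d u : ℕ} (hd : 0 < d) {m : ℕ} (h : d ∣ u * m) : (d / Nat.gcd d u) ∣ m := by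
  have hg : 0 < Nat.gcd d u := Nat.gcd_pos_of_pos_left u hd
  have hcop := Nat.coprime_div_gcd_div_gcd (m := d) (n := u) hg
  have h1 : d / Nat.gcd d u ∣ (u / Nat.gcd d u) * m := by
    have hdd : Nat.gcd d u * (d / Nat.gcd d u) = d := Nat.mul_div_cancel' (Nat.gcd_dvd_left d u)
    have huu : Nat.gcd d u * (u / Nat.gcd d u) = u := Nat.mul_div_cancel' (Nat.gcd_dvd_right d u)
    have h2 : Nat.gcd d u * (d / Nat.gcd d u) ∣ Nat.gcd d u * ((u / Nat.gcd d u) * m) := by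
      rw [hdd, ← mul_assoc, huu]; exact h
    exact (Nat.mul_dvd_mul_iff_left hg).mp h2
  exact hcop.dvd_of_dvd_mul_left h1

lemma apos {d u : ℕ} (hd : 0 < d) {i : ℕ} (h1 : 0 < i) (h2 : i < d / Nat.gcd d u) :
    0 < u * i % d := by
  rcases Nat.eq_zero_or_pos (u * i % d) with h | h
  · exfalso
    have hdv := qdvd hd (Nat.dvd_of_mod_eq_zero h)
    have := Nat.le_of_dvd h1 hdv
    omega
  · exact h

lemma ainj {d u : ℕ} (hd : 0 < d) {i k : ℕ} (hik : i ≤ k) (h2 : k - i < d / Nat.gcd d u)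
    (he : u * i % d = u * k % d) : i = k := by
  obtain ⟨t, rfl⟩ := Nat.exists_eq_add_of_le hik
  have hmod : u * i ≡ u * (i + t) [MOD d] := he
  have hdv : d ∣ u * (i + t) - u * i := (Nat.modEq_iff_dvd' (Nat.mul_le_mul_left u hik)).mp hmod
  have hh : u * (i + t) - u * i = u * t := by rw [Nat.mul_add]; omega
  rw [hh] at hdv
  have := qdvd hd hdv
  rcases Nat.eq_zero_or_pos t with rfl | ht
  · omega
  · have := Nat.le_of_dvd ht this; omega

lemma ainj2 {d u : ℕ} (hd : 0 < d) {i k : ℕ} (hi : i < d / Nat.gcd d u)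
    (hk : k < d / Nat.gcd d u) (he : u * i % d = u * k % d) : i = k := by
  rcases le_total i k with h | h
  · exact ainj hd h (by omega) he
  · exact (ainj hd h (by omega) he.symm).symm

theorem stmt18 (d u : ℕ) (hu : 0 < u) (hud : u < d) :
    (1 ∈ DeltaMax d u (d / Nat.gcd d u) ∩ DeltaMin d u (d / Nat.gcd d u)) ∧
    ∀ j, 1 < j → j < d / Nat.gcd d u →
      j ∈ DeltaMax d u (d / Nat.gcd d u) ∪ DeltaMin d u (d / Nat.gcd d u) →
      ∀ δ θ : ℕ,
        (δ ∈ DeltaMax d u (d / Nat.gcd d u) ∧ δ < j ∧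
          ∀ γ ∈ DeltaMax d u (d / Nat.gcd d u), γ < j → γ ≤ δ) →
        (θ ∈ DeltaMin d u (d / Nat.gcd d u) ∧ θ < j ∧
          ∀ γ ∈ DeltaMin d u (d / Nat.gcd d u), γ < j → γ ≤ θ) →
        j = δ + θ := by
  have hd : 0 < d := lt_trans hu hud
  have hq1 : 1 ≤ d / Nat.gcd d u := by
    have h1 : Nat.gcd d u ≤ d := Nat.le_of_dvd hd (Nat.gcd_dvd_left d u)
    have h2 : 0 < Nat.gcd d u := Nat.gcd_pos_of_pos_left u hd
    exact (Nat.one_le_div_iff h2).mpr h1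
  constructor
  · constructor
    · exact ⟨le_refl 1, hq1, fun k h1 h2 => by rw [show k = 1 by omega]⟩
    · exact ⟨le_refl 1, hq1, fun k h1 h2 => by rw [show k = 1 by omega]⟩
  intro j hj1 hjq hmem δ θ ⟨hδmem, hδj, hδmax⟩ ⟨hθmem, hθj, hθmax⟩
  obtain ⟨hδ1, hδq, hδrec⟩ := hδmem
  obtain ⟨hθ1, hθq, hθrec⟩ := hθmem
  -- a_δ is the maximum over [1, j-1]
  have maxδ : ∀ k, 1 ≤ k → k < j → u * k % d ≤ u * δ % d := by
    intro k
    induction k using Nat.strong_induction_on with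
    | _ k ih =>
      intro hk1 hkj
      by_contra hlt
      push_neg at hlt
      have hkmem : k ∈ DeltaMax d u (d / Nat.gcd d u) := by
        refine ⟨hk1, by omega, ?_⟩
        intro m hm1 hmk
        rcases eq_or_lt_of_le hmk with rfl | hmlt
        · exact le_refl _
        · exact le_trans (ih m hmlt hm1 (by omega)) (le_of_lt hlt)
      have h1 := hδmax k hkmem hkj
      have h2 := hδrec k hk1 h1
      omega
  have minθ : ∀ k, 1 ≤ k → k < j → u * θ % d ≤ u * k % d := by
    intro k
    induction k using Nat.strong_induction_on with
    | _ k ih =>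
      intro hk1 hkj
      by_contra hlt
      push_neg at hlt
      have hkmem : k ∈ DeltaMin d u (d / Nat.gcd d u) := by
        refine ⟨hk1, by omega, ?_⟩
        intro m hm1 hmk
        rcases eq_or_lt_of_le hmk with rfl | hmlt
        · exact le_refl _
        · exact le_trans (le_of_lt hlt) (ih m hmlt hm1 (by omega))
      have h1 := hθmax k hkmem hkj
      have h2 := hθrec k hk1 h1
      omega
  have hδd : u * δ % d < d := Nat.mod_lt _ hd
  have hθd : u * θ % d < d := Nat.mod_lt _ hd
  have hjd : u * j % d < d := Nat.mod_lt _ hd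
  have hθpos : 0 < u * θ % d := apos hd (by omega) (by omega)
  have hδpos : 0 < u * δ % d := apos hd (by omega) (by omega)
  rcases hmem with hmax | hmin
  · -- j is a max record
    obtain ⟨hj1', hjq', hjrec⟩ := hmax
    have hδlt : u * δ % d < u * j % d := by
      have h1 : u * δ % d ≤ u * j % d := hjrec δ hδ1 (le_of_lt hδj)
      rcases eq_or_lt_of_le h1 with he | h
      · exact absurd (ainj2 hd (by omega) hjq he) (by omega)
      · exact h
    set i := j - δ with hidef
    have hij : i < j := by omega
    have hi1 : 1 ≤ i := by omega
    have hsum : u * j % d = (u * δ % d + u * i % d) % d := by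
      conv_lhs => rw [show j = δ + i by omega]
      rw [Nat.mul_add, Nat.add_mod]
    have hxpos : 0 < u * i % d := apos hd hi1 (by omega)
    have hid : u * i % d < d := Nat.mod_lt _ hd
    have hx : u * j % d = u * δ % d + u * i % d := by
      rcases lt_or_ge (u * δ % d + u * i % d) d with h | h
      · rw [hsum, Nat.mod_eq_of_lt h]
      · exfalso
        have hmm : (u * δ % d + u * i % d) % d = u * δ % d + u * i % d - d := by
          rw [Nat.mod_eq_sub_mod h, Nat.mod_eq_of_lt (by omega)]
        omega
    have hxθ : u * i % d ≤ u * θ % d := by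
      by_contra hc
      push_neg at hc
      rcases lt_or_ge (δ + θ) j with hs | hs
      · have hssum : u * (δ + θ) % d = (u * δ % d + u * θ % d) % d := by
          rw [Nat.mul_add, Nat.add_mod]
        have hlt2 : u * δ % d + u * θ % d < d := by omega
        rw [Nat.mod_eq_of_lt hlt2] at hssum
        have := maxδ (δ + θ) (by omega) hs
        omega
      · have hiθ : i ≤ θ := by omega
        rcases eq_or_lt_of_le hiθ with he | hlt2
        · rw [he] at hc; omega
        · set t := θ - i with htdef
          have ht1 : 1 ≤ t := by omega
          have htj : t < j := by omega
          have hts : u * θ % d = (u * i % d + u * t % d) % d := by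
            conv_lhs => rw [show θ = i + t by omega]
            rw [Nat.mul_add, Nat.add_mod]
          have htd : u * t % d < d := Nat.mod_lt _ hd
          rcases lt_or_ge (u * i % d + u * t % d) d with h | h
          · rw [Nat.mod_eq_of_lt h] at hts; omega
          · have hmm : (u * i % d + u * t % d) % d = u * i % d + u * t % d - d := by
              rw [Nat.mod_eq_sub_mod h, Nat.mod_eq_of_lt (by omega)]
            rw [hmm] at hts
            have := maxδ t ht1 htj
            omega
    have hθx : u * θ % d ≤ u * i % d := minθ i hi1 hij
    have : i = θ := ainj2 (u := u) hd (by omega) (by omega) (le_antisymm hxθ hθx)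
    omega
  · -- j is a min record
    obtain ⟨hj1', hjq', hjrec⟩ := hmin
    have hθlt : u * j % d < u * θ % d := by
      have h1 : u * j % d ≤ u * θ % d := hjrec θ hθ1 (le_of_lt hθj)
      rcases eq_or_lt_of_le h1 with he | h
      · exact absurd (ainj2 hd hjq (by omega) he) (by omega)
      · exact h
    set i := j - θ with hidef
    have hij : i < j := by omega
    have hi1 : 1 ≤ i := by omega
    have hsum : u * j % d = (u * θ % d + u * i % d) % d := by
      conv_lhs => rw [show j = θ + i by omega]
      rw [Nat.mul_add, Nat.add_mod]
    have hxpos : 0 < u * i % d := apos hd hi1 (by omega)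
    have hid : u * i % d < d := Nat.mod_lt _ hd
    have hjpos : 0 < u * j % d := apos hd (by omega) hjq
    have hx : u * j % d = u * θ % d + u * i % d - d := by
      rcases lt_or_ge (u * θ % d + u * i % d) d with h | h
      · exfalso
        rw [Nat.mod_eq_of_lt h] at hsum
        omega
      · have hmm : (u * θ % d + u * i % d) % d = u * θ % d + u * i % d - d := by
          rw [Nat.mod_eq_sub_mod h, Nat.mod_eq_of_lt (by omega)]
        rw [hmm] at hsum; exact hsum
    have hwrap : d ≤ u * θ % d + u * i % d := by omega
    have hxδ : u * δ % d ≤ u * i % d := by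
      by_contra hc
      push_neg at hc
      rcases lt_or_ge (δ + θ) j with hs | hs
      · have hssum : u * (δ + θ) % d = (u * δ % d + u * θ % d) % d := by
          rw [Nat.mul_add, Nat.add_mod]
        have hge : d ≤ u * δ % d + u * θ % d := by omega
        have hmm : (u * δ % d + u * θ % d) % d = u * δ % d + u * θ % d - d := by
          rw [Nat.mod_eq_sub_mod hge, Nat.mod_eq_of_lt (by omega)]
        rw [hmm] at hssum
        have := minθ (δ + θ) (by omega) hs
        omega
      · have hiδ : i ≤ δ := by omega
        rcases eq_or_lt_of_le hiδ with he | hlt2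
        · rw [he] at hc; omega
        · set t := δ - i with htdef
          have ht1 : 1 ≤ t := by omega
          have htj : t < j := by omega
          have hts : u * δ % d = (u * i % d + u * t % d) % d := by
            conv_lhs => rw [show δ = i + t by omega]
            rw [Nat.mul_add, Nat.add_mod]
          have htd : u * t % d < d := Nat.mod_lt _ hd
          rcases lt_or_ge (u * i % d + u * t % d) d with h | h
          · rw [Nat.mod_eq_of_lt h] at hts
            have := minθ t ht1 htj
            omega
          · have hmm : (u * i % d + u * t % d) % d = u * i % d + u * t % d - d := by
              rw [Nat.mod_eq_sub_mod h, Nat.mod_eq_of_lt (by omega)]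
            rw [hmm] at hts
            omega
    have hδx : u * i % d ≤ u * δ % d := maxδ i hi1 hij
    have : i = δ := ainj2 (u := u) hd (by omega) (by omega) (le_antisymm hδx hxδ)
    omega
end
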